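/- Let d ≥ 1, let n be a real number, and let g : ℝ^d → ℂ be measurable. For all real t > 0 and Re > 0, ∫_{ℝ^d} (1 + ‖ξ‖²)^n · exp(−2t‖ξ‖²/Re) · |g(ξ)|² dξ ≤ (√(Re/(2et)) + 1)² · ∫_{ℝ^d} (1 + ‖ξ‖²)^{n−1} · |g(ξ)|² dξ (an inequality in [0, ∞], using the Lebesgue integral). -/

import Mathlib

/-!
Since `(1 + x)^n = (1 + x)^(n-1) (1 + x)`, it suffices to bound the multiplier
`(1 + x) e^{-a x}` with `x = ‖ξ‖²`, `a = 2t/Re` uniformly in `x ≥ 0`. From `y e^{-y} ≤ e^{-1}`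
we get `x e^{-a x} ≤ 1/(a e)`, hence `(1 + x) e^{-a x} ≤ 1 + 1/(a e) ≤ (√(1/(a e)) + 1)²`.
-/

open MeasureTheory Real

lemma Real.mul_exp_neg_mul_le {a : ℝ} (ha : 0 < a) (x : ℝ) :
    x * exp (-(a * x)) ≤ 1 / (a * exp 1) := by
  rw [le_div_iff₀ (by positivity)]
  calc x * exp (-(a * x)) * (a * exp 1) = a * x * exp (-(a * x)) * exp 1 := by ring
    _ ≤ exp (-1) * exp 1 := by gcongr; exact mul_exp_neg_le_exp_neg_one (a * x)
    _ = 1 := by rw [← exp_add, neg_add_cancel, exp_zero]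

lemma Real.one_add_mul_exp_neg_mul_le {a x : ℝ} (ha : 0 < a) (hx : 0 ≤ x) :
    (1 + x) * exp (-(a * x)) ≤ (√(1 / (a * exp 1)) + 1) ^ 2 := by
  have hdecay : exp (-(a * x)) ≤ 1 := exp_le_one_iff.mpr (by nlinarith)
  have hsq : √(1 / (a * exp 1)) ^ 2 = 1 / (a * exp 1) := sq_sqrt (by positivity)
  nlinarith [mul_exp_neg_mul_le ha x, sqrt_nonneg (1 / (a * exp 1))]

lemma Real.one_add_mul_exp_heat_le {t Re x : ℝ} (ht : 0 < t) (hRe : 0 < Re) (hx : 0 ≤ x) :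
    (1 + x) * exp (-2 * t * x / Re) ≤ (√(Re / (2 * exp 1 * t)) + 1) ^ 2 := by
  have hexp : -2 * t * x / Re = -(2 * t / Re * x) := by ring
  have hconst : Re / (2 * exp 1 * t) = 1 / (2 * t / Re * exp 1) := by
    field_simp
  rw [hexp, hconst]
  exact one_add_mul_exp_neg_mul_le (by positivity) hx

theorem stmt_3_general (d : ℕ) (n : ℝ) (g : EuclideanSpace ℝ (Fin d) → ℂ)
    (t Re : ℝ) (ht : 0 < t) (hRe : 0 < Re) :
    ∫⁻ ξ, ENNReal.ofReal
        ((1 + ‖ξ‖ ^ 2) ^ n * Real.exp (-2 * t * ‖ξ‖ ^ 2 / Re) * ‖g ξ‖ ^ 2)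
      ≤ ENNReal.ofReal ((Real.sqrt (Re / (2 * Real.exp 1 * t)) + 1) ^ 2) *
        ∫⁻ ξ, ENNReal.ofReal ((1 + ‖ξ‖ ^ 2) ^ (n - 1) * ‖g ξ‖ ^ 2) := by
  rw [← lintegral_const_mul' _ _ ENNReal.ofReal_ne_top]
  refine lintegral_mono fun ξ ↦ ?_
  rw [← ENNReal.ofReal_mul (by positivity)]
  refine ENNReal.ofReal_le_ofReal ?_
  have hweight : (1 + ‖ξ‖ ^ 2) ^ n = (1 + ‖ξ‖ ^ 2) ^ (n - 1) * (1 + ‖ξ‖ ^ 2) := by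
    rw [← rpow_add_one (by positivity), sub_add_cancel]
  calc (1 + ‖ξ‖ ^ 2) ^ n * exp (-2 * t * ‖ξ‖ ^ 2 / Re) * ‖g ξ‖ ^ 2
      = ((1 + ‖ξ‖ ^ 2) * exp (-2 * t * ‖ξ‖ ^ 2 / Re)) * ((1 + ‖ξ‖ ^ 2) ^ (n - 1) * ‖g ξ‖ ^ 2) := by
        rw [hweight]; ring
    _ ≤ (√(Re / (2 * exp 1 * t)) + 1) ^ 2 * ((1 + ‖ξ‖ ^ 2) ^ (n - 1) * ‖g ξ‖ ^ 2) :=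
        mul_le_mul_of_nonneg_right (one_add_mul_exp_heat_le ht hRe (by positivity)) (by positivity)

/-- Weighted `L²` smoothing bound for the heat-semigroup symbol: for `d ≥ 1`, real `n`,
measurable `g : ℝ^d → ℂ`, and all real `t > 0`, `Re > 0`,
`∫ (1+‖ξ‖²)^n e^{−2t‖ξ‖²/Re} |g(ξ)|² dξ ≤ (√(Re/(2et)) + 1)² ∫ (1+‖ξ‖²)^{n−1} |g(ξ)|² dξ`,
as an inequality in `[0,∞]`. -/
theorem stmt_3 (d : ℕ) (hd : 1 ≤ d) (n : ℝ) (g : EuclideanSpace ℝ (Fin d) → ℂ)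
    (hg : Measurable g) (t Re : ℝ) (ht : 0 < t) (hRe : 0 < Re) :
    ∫⁻ ξ, ENNReal.ofReal
        ((1 + ‖ξ‖ ^ 2) ^ n * Real.exp (-2 * t * ‖ξ‖ ^ 2 / Re) * ‖g ξ‖ ^ 2)
      ≤ ENNReal.ofReal ((Real.sqrt (Re / (2 * Real.exp 1 * t)) + 1) ^ 2) *
        ∫⁻ ξ, ENNReal.ofReal ((1 + ‖ξ‖ ^ 2) ^ (n - 1) * ‖g ξ‖ ^ 2) :=
  stmt_3_general d n g t Re ht hRe
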